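/- Let d ∈ ℕ and N = (N₁,…,N_d) ∈ ℕ^d, and let V_N be the modified de la Vallée Poussin operator given by V_N(f)(x) = ∑_{k ∈ ℤ^d} f̂(k) v_k exp(2πi k·x), with product weights v_k = ∏_{j=1}^d v_{k_j}, where v_{k_j} = 1 if |k_j| ≤ N_j, v_{k_j} = ((2d+1)N_j − |k_j|)/(2d N_j) if N_j < |k_j| ≤ (2d+1)N_j, and v_{k_j} = 0 if |k_j| > (2d+1)N_j. Then for every f ∈ L_∞(𝕋^d) it holds ‖V_N(f)‖_{L_∞(𝕋^d)} ≤ e · ‖f‖_{L_∞(𝕋^d)}. -/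

import Mathlib

open MeasureTheory Real ENNReal

noncomputable section

/-- Normalized Lebesgue measure on the unit cube `[0,1]^d`, modelling the torus `𝕋^d`. -/
def unitCube (d : ℕ) : Measure (Fin d → ℝ) :=
  volume.restrict (Set.univ.pi fun _ => Set.Icc (0 : ℝ) 1)

/-- The complex exponential `exp(2πi k·x)`. -/
def trigChar {d : ℕ} (k : Fin d → ℤ) (x : Fin d → ℝ) : ℂ :=
  Complex.exp (2 * (Real.pi : ℂ) * Complex.I * ∑ j, (k j : ℂ) * (x j : ℂ))

/-- The `k`-th Fourier coefficient of `f`. -/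
def fourierCoef {d : ℕ} (f : (Fin d → ℝ) → ℂ) (k : Fin d → ℤ) : ℂ :=
  ∫ x, f x * Complex.exp (-(2 * (Real.pi : ℂ) * Complex.I) * ∑ j, (k j : ℂ) * (x j : ℂ))
    ∂(unitCube d)

/-- The univariate de la Vallée Poussin weight `v_{k}` (depending on the dimension `d`):
`1` for `|k| ≤ N`, linearly decaying for `N < |k| ≤ (2d+1)N`, `0` beyond. -/
def vpWeight (d N : ℕ) (k : ℤ) : ℝ :=
  if |k| ≤ (N : ℤ) then 1
  else if |k| ≤ (2 * (d : ℤ) + 1) * N then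
    (((2 * (d : ℤ) + 1) * N - |k| : ℤ) : ℝ) / (2 * (d : ℝ) * N)
  else 0

/-- The modified de la Vallée Poussin operator
`V_N(f)(x) = ∑_{k ∈ ℤ^d} f̂(k) v_k exp(2πi k·x)` with product weights `v_k = ∏_j v_{k_j}`
(the sum is finite since the weights vanish for `|k_j| > (2d+1)N_j`). -/
def vallee (d : ℕ) (N : Fin d → ℕ) (f : (Fin d → ℝ) → ℂ) : (Fin d → ℝ) → ℂ :=
  fun x => ∑ k ∈ Fintype.piFinset
      (fun j => Finset.Icc (-((2 * (d : ℤ) + 1) * N j)) ((2 * (d : ℤ) + 1) * N j)),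
    fourierCoef f k * ((∏ j, vpWeight d (N j) (k j) : ℝ) : ℂ) * trigChar k x

/-!
Let `K_N(t) = ∑_k v_k e^{2πikt}` be the one-dimensional kernel. Then `V_N f` is the integral of
`f` against `∏_j K_{N_j}(x_j - y_j)`, so `‖V_N f‖_∞ ≤ ‖f‖_∞ ∏_j ‖K_{N_j}‖_{L¹}`. The weights are
a difference of Fejér weights: `2dN · K_N = F_{(2d+1)N} - F_N` with
`F_m = |∑_{0 ≤ j < m} e^{2πijt}|²`. Since `F_m ≥ 0` and `∫ F_m = m`, this gives
`‖K_N‖_{L¹} ≤ ((2d+1)N + N) / (2dN) = 1 + 1/d`, and `(1 + 1/d)^d ≤ e`.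
-/

lemma Function.Periodic.integral_Icc_comp_sub_left {E : Type*} [NormedAddCommGroup E]
    [NormedSpace ℝ E] {g : ℝ → E} {T : ℝ} (hg : Function.Periodic g T) (hT : 0 ≤ T) (x : ℝ) :
    ∫ t in Set.Icc 0 T, g (x - t) = ∫ t in (0 : ℝ)..T, g t := by
  rw [integral_Icc_eq_integral_Ioc, ← intervalIntegral.integral_of_le hT,
    intervalIntegral.integral_comp_sub_left, sub_zero]
  simpa using hg.intervalIntegral_add_eq (x - T) 0

lemma enorm_integral_mul_le {α 𝕜 : Type*} [MeasurableSpace α] [RCLike 𝕜] {μ : Measure α}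
    (f : α → 𝕜) {g : α → 𝕜} (hg : AEMeasurable g μ) :
    ‖∫ y, f y * g y ∂μ‖ₑ ≤ eLpNorm f ⊤ μ * ∫⁻ y, ‖g y‖ₑ ∂μ := by
  calc ‖∫ y, f y * g y ∂μ‖ₑ ≤ ∫⁻ y, ‖f y * g y‖ₑ ∂μ := enorm_integral_le_lintegral_enorm _
    _ ≤ ∫⁻ y, eLpNorm f ⊤ μ * ‖g y‖ₑ ∂μ := by
        refine lintegral_mono_ae ((enorm_ae_le_eLpNormEssSup f μ).mono fun y hy => ?_)
        rw [enorm_mul, eLpNorm_exponent_top]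
        gcongr
    _ = eLpNorm f ⊤ μ * ∫⁻ y, ‖g y‖ₑ ∂μ := lintegral_const_mul'' _ hg.enorm

namespace ValleePoussin

open Finset Complex ComplexConjugate

def expChar (k : ℤ) (t : ℝ) : ℂ := cexp (2 * π * I * (k * t))

lemma expChar_add (a b : ℤ) (t : ℝ) : expChar (a + b) t = expChar a t * expChar b t := by
  rw [expChar, expChar, expChar, ← Complex.exp_add]
  push_cast
  ring_nf

lemma conj_expChar (k : ℤ) (t : ℝ) : conj (expChar k t) = expChar (-k) t := by
  rw [expChar, expChar, ← Complex.exp_conj]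
  simp [map_ofNat]

lemma norm_expChar (k : ℤ) (t : ℝ) : ‖expChar k t‖ = 1 := by
  rw [expChar, show 2 * π * I * (k * t) = ((2 * π * k * t : ℝ) : ℂ) * I by push_cast; ring]
  exact Complex.norm_exp_ofReal_mul_I _

@[fun_prop]
lemma continuous_expChar (k : ℤ) : Continuous (expChar k) := by
  unfold expChar; fun_prop

lemma expChar_periodic (k : ℤ) : Function.Periodic (expChar k) 1 := by
  intro t
  rw [expChar, expChar, show 2 * π * I * (k * ((t + 1 : ℝ) : ℂ))
    = 2 * π * I * (k * t) + k * (2 * π * I) by push_cast; ring,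
    Complex.exp_add, Complex.exp_int_mul_two_pi_mul_I, mul_one]

lemma integral_expChar (k : ℤ) : ∫ t in (0 : ℝ)..1, expChar k t = if k = 0 then 1 else 0 := by
  split_ifs with hk
  · simp [hk, expChar]
  have hc : 2 * π * I * k ≠ 0 := by simp [Real.pi_ne_zero, hk]
  simp_rw [expChar, ← mul_assoc]
  rw [integral_exp_mul_complex hc]
  simp [Complex.exp_int_mul_two_pi_mul_I, mul_comm _ (k : ℂ)]

/-- `m` times the Fejér kernel of order `m - 1`. -/
def fejer (m : ℕ) (t : ℝ) : ℝ := normSq (∑ j ∈ Ico (0 : ℤ) m, expChar j t)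

lemma fejer_nonneg (m : ℕ) (t : ℝ) : 0 ≤ fejer m t := normSq_nonneg _

@[fun_prop]
lemma continuous_fejer (m : ℕ) : Continuous (fejer m) := by
  unfold fejer; fun_prop

lemma card_filter_sub_eq (m : ℕ) (k : ℤ) :
    #{p ∈ Ico (0 : ℤ) m ×ˢ Ico (0 : ℤ) m | p.1 - p.2 = k} = ((m : ℤ) - |k|).toNat := by
  have : {p ∈ Ico (0 : ℤ) m ×ˢ Ico (0 : ℤ) m | p.1 - p.2 = k}
      = (Ico (max 0 k) (min m (m + k))).image fun j => (j, j - k) := by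
    ext ⟨j, l⟩
    simp only [mem_filter, mem_product, mem_Ico, mem_image, Prod.mk.injEq]
    constructor
    · rintro ⟨⟨⟨_, _⟩, _, _⟩, rfl⟩
      exact ⟨j, ⟨by omega, by omega⟩, rfl, by omega⟩
    · rintro ⟨i, ⟨_, _⟩, rfl, rfl⟩
      omega
  rw [this, card_image_of_injective _ fun a b h => (Prod.ext_iff.mp h).1, Int.card_Ico]
  rcases abs_cases k with ⟨h, _⟩ | ⟨h, _⟩ <;> rw [h] <;> omega

lemma fejer_eq_sum {m M : ℕ} (hmM : m ≤ M) (t : ℝ) :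
    (fejer m t : ℂ) = ∑ k ∈ Icc (-(M : ℤ)) M, (((m : ℤ) - |k|).toNat : ℂ) * expChar k t := by
  have hdiff : ∀ p ∈ Ico (0 : ℤ) m ×ˢ Ico (0 : ℤ) m, p.1 - p.2 ∈ Icc (-(M : ℤ)) M := by
    simp only [mem_product, mem_Ico, mem_Icc]
    omega
  rw [fejer, ← mul_conj, map_sum, sum_mul_sum, ← sum_product',
    ← sum_fiberwise_of_maps_to hdiff]
  refine sum_congr rfl fun k _ => ?_
  rw [← card_filter_sub_eq, ← nsmul_eq_mul, ← sum_const]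
  refine sum_congr rfl fun p hp => ?_
  rw [conj_expChar, ← expChar_add, ← (mem_filter.mp hp).2, sub_eq_add_neg]

lemma integral_fejer (m : ℕ) : ∫ t in (0 : ℝ)..1, fejer m t = m := by
  have hint : ∀ k ∈ Icc (-(m : ℤ)) m, IntervalIntegrable
      (fun t => (((m : ℤ) - |k|).toNat : ℂ) * expChar k t) MeasureSpace.volume 0 1 :=
    fun k _ => (by fun_prop : Continuous _).intervalIntegrable 0 1
  apply Complex.ofReal_injective
  rw [← intervalIntegral.integral_ofReal]
  simp_rw [fejer_eq_sum le_rfl]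
  rw [intervalIntegral.integral_finsetSum hint]
  simp [intervalIntegral.integral_const_mul, integral_expChar]

def vpKernel (d N : ℕ) (t : ℝ) : ℂ :=
  ∑ k ∈ Icc (-((2 * (d : ℤ) + 1) * N)) ((2 * (d : ℤ) + 1) * N),
    (vpWeight d N k : ℂ) * expChar k t

@[fun_prop]
lemma continuous_vpKernel (d N : ℕ) : Continuous (vpKernel d N) := by
  unfold vpKernel; fun_prop

lemma vpKernel_periodic (d N : ℕ) : Function.Periodic (vpKernel d N) 1 := fun t => by
  simp only [vpKernel, expChar_periodic _ t]

lemma vpWeight_mul (d N : ℕ) (k : ℤ) :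
    2 * d * N * vpWeight d N k
      = (((2 * (d : ℤ) + 1) * N - |k|).toNat : ℝ) - (((N : ℤ) - |k|).toNat : ℝ) := by
  have hNM : (N : ℤ) ≤ (2 * d + 1) * N := le_mul_of_one_le_left (by positivity) (by omega)
  have cast_toNat (a : ℤ) : (a.toNat : ℝ) = ((max a 0 : ℤ) : ℝ) := by
    rw [← Int.toNat_eq_max, Int.cast_natCast]
  rw [cast_toNat, cast_toNat, vpWeight]
  split_ifs with h₁ h₂
  · rw [max_eq_left (by omega), max_eq_left (by omega)]
    push_cast
    ring
  · have hdN : (2 * d * N : ℝ) ≠ 0 := by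
      have : (0 : ℤ) < 2 * d * N := by linarith
      exact_mod_cast this.ne'
    rw [mul_div_cancel₀ _ hdN, max_eq_left (by omega), max_eq_right (by omega)]
    simp
  · rw [max_eq_right (by omega), max_eq_right (by omega)]
    simp

lemma vpKernel_eq_fejer_sub (d N : ℕ) (t : ℝ) :
    (2 * d * N : ℂ) * vpKernel d N t = fejer ((2 * d + 1) * N) t - fejer N t := by
  rw [fejer_eq_sum le_rfl, fejer_eq_sum (Nat.le_mul_of_pos_left N (by omega : 0 < 2 * d + 1)),
    vpKernel, mul_sum, ← sum_sub_distrib]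
  push_cast
  refine sum_congr rfl fun k _ => ?_
  rw [← mul_assoc, ← sub_mul]
  exact_mod_cast congrArg (fun r : ℝ => (r : ℂ) * expChar k t) (vpWeight_mul d N k)

lemma norm_vpKernel_le {d N : ℕ} (hd : 0 < d) (hN : 0 < N) (t : ℝ) :
    ‖vpKernel d N t‖ ≤ (fejer ((2 * d + 1) * N) t + fejer N t) / (2 * d * N) := by
  have hpos : (0 : ℝ) < 2 * d * N := by positivity
  rw [le_div_iff₀ hpos, mul_comm, ← Real.norm_of_nonneg hpos.le, ← Complex.norm_real,
    ← norm_mul]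
  push_cast
  rw [vpKernel_eq_fejer_sub, ← Complex.ofReal_sub, Complex.norm_real, Real.norm_eq_abs]
  exact (abs_sub _ _).trans_eq <| by
    rw [abs_of_nonneg (fejer_nonneg _ _), abs_of_nonneg (fejer_nonneg _ _)]

lemma integral_norm_vpKernel_le {d N : ℕ} (hd : 0 < d) (hN : 0 < N) :
    ∫ t in (0 : ℝ)..1, ‖vpKernel d N t‖ ≤ 1 + (d : ℝ)⁻¹ := by
  calc ∫ t in (0 : ℝ)..1, ‖vpKernel d N t‖
      ≤ ∫ t in (0 : ℝ)..1, (fejer ((2 * d + 1) * N) t + fejer N t) / (2 * d * N) :=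
        intervalIntegral.integral_mono_on zero_le_one
          ((continuous_vpKernel d N).norm.intervalIntegrable 0 1)
          ((by fun_prop : Continuous _).intervalIntegrable 0 1)
          fun t _ => norm_vpKernel_le hd hN t
    _ = 1 + (d : ℝ)⁻¹ := by
        rw [intervalIntegral.integral_div, intervalIntegral.integral_add
          ((continuous_fejer _).intervalIntegrable 0 1)
          ((continuous_fejer _).intervalIntegrable 0 1), integral_fejer, integral_fejer]
        field_simp
        push_cast
        ring

lemma unitCube_eq_pi (d : ℕ) :
    unitCube d = Measure.pi fun _ => volume.restrict (Set.Icc (0 : ℝ) 1) := by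
  rw [unitCube, volume_pi, Measure.restrict_pi_pi]

instance (d : ℕ) : IsFiniteMeasure (unitCube d) := by
  rw [unitCube_eq_pi]; infer_instance

lemma prod_expChar_sub {d : ℕ} (k : Fin d → ℤ) (x y : Fin d → ℝ) :
    ∏ j, expChar (k j) (x j - y j)
      = trigChar k x * cexp (-(2 * π * I) * ∑ j, (k j : ℂ) * (y j : ℂ)) := by
  simp only [expChar, trigChar, ← Complex.exp_sum, ← Complex.exp_add, mul_sum, ← sum_add_distrib]
  push_cast
  ring_nf

lemma vallee_eq_integral {d : ℕ} (N : Fin d → ℕ) {f : (Fin d → ℝ) → ℂ}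
    (hf : Integrable f (unitCube d)) (x : Fin d → ℝ) :
    vallee d N f x = ∫ y, f y * ∏ j, vpKernel d (N j) (x j - y j) ∂unitCube d := by
  have hterm (k : Fin d → ℤ) :
      fourierCoef f k * ((∏ j, vpWeight d (N j) (k j) : ℝ) : ℂ) * trigChar k x
        = ∫ y, f y * ∏ j, ((vpWeight d (N j) (k j) : ℂ) * expChar (k j) (x j - y j))
            ∂unitCube d := by
    rw [fourierCoef, ← integral_mul_const, ← integral_mul_const]
    congr 1 with y
    rw [prod_mul_distrib, prod_expChar_sub]
    push_cast
    ring
  have hint (k : Fin d → ℤ) : Integrable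
      (fun y => f y * ∏ j, ((vpWeight d (N j) (k j) : ℂ) * expChar (k j) (x j - y j)))
      (unitCube d) :=
    hf.mul_bdd (by fun_prop : Continuous _).aestronglyMeasurable
      (ae_of_all _ fun y => (by simp [norm_expChar] :
        ‖∏ j, ((vpWeight d (N j) (k j) : ℂ) * expChar (k j) (x j - y j))‖
          = ∏ j, ‖(vpWeight d (N j) (k j) : ℂ)‖).le)
  simp_rw [vallee, hterm, vpKernel, prod_univ_sum, mul_sum]
  rw [integral_finsetSum _ fun k _ => hint k]

lemma integral_norm_prod_vpKernel_le {d : ℕ} (hd : 0 < d) {N : Fin d → ℕ} (hN : ∀ j, 0 < N j)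
    (x : Fin d → ℝ) :
    ∫ y, ‖∏ j, vpKernel d (N j) (x j - y j)‖ ∂unitCube d ≤ Real.exp 1 := by
  have hfactor (j : Fin d) :
      ∫ t in Set.Icc 0 1, ‖vpKernel d (N j) (x j - t)‖ ≤ 1 + (d : ℝ)⁻¹ := by
    have hper : Function.Periodic (fun t => ‖vpKernel d (N j) t‖) 1 := fun t => by
      simp only [vpKernel_periodic d (N j) t]
    exact (hper.integral_Icc_comp_sub_left zero_le_one (x j)).trans_le
      (integral_norm_vpKernel_le hd (hN j))
  simp_rw [norm_prod]
  rw [unitCube_eq_pi, integral_fintype_prod_eq_prod (fun j t => ‖vpKernel d (N j) (x j - t)‖)]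
  calc ∏ j, ∫ t in Set.Icc 0 1, ‖vpKernel d (N j) (x j - t)‖
      ≤ ∏ _j : Fin d, (1 + (d : ℝ)⁻¹) :=
        prod_le_prod (fun j _ => integral_nonneg fun _ => norm_nonneg _) fun j _ => hfactor j
    _ = (1 + (d : ℝ)⁻¹) ^ d := by simp
    _ ≤ Real.exp 1 := Real.one_add_inv_pow_le_exp

lemma lintegral_enorm_prod_vpKernel_le {d : ℕ} (hd : 0 < d) {N : Fin d → ℕ}
    (hN : ∀ j, 0 < N j) (x : Fin d → ℝ) :
    ∫⁻ y, ‖∏ j, vpKernel d (N j) (x j - y j)‖ₑ ∂unitCube d ≤ ENNReal.ofReal (Real.exp 1) := by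
  have hK : Integrable (fun y : Fin d → ℝ => ∏ j, vpKernel d (N j) (x j - y j)) (unitCube d) :=
    (by fun_prop : Continuous _).continuousOn.integrableOn_compact
      (isCompact_univ_pi fun _ => isCompact_Icc)
  rw [← ofReal_integral_norm_eq_lintegral_enorm hK]
  exact ENNReal.ofReal_le_ofReal (integral_norm_prod_vpKernel_le hd hN x)

end ValleePoussin

open ValleePoussin

theorem vallee_Linfty_Linfty (d : ℕ) (hd : 0 < d) (N : Fin d → ℕ) (hN : ∀ j, 1 ≤ N j)
    (f : (Fin d → ℝ) → ℂ) (hf : MemLp f ⊤ (unitCube d)) :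
    eLpNorm (vallee d N f) ⊤ (unitCube d) ≤
      ENNReal.ofReal (Real.exp 1) * eLpNorm f ⊤ (unitCube d) := by
  rw [eLpNorm_exponent_top]
  refine eLpNormEssSup_le_of_ae_enorm_bound (ae_of_all _ fun x => ?_)
  rw [vallee_eq_integral N (hf.integrable le_top), mul_comm]
  refine (enorm_integral_mul_le f (by fun_prop : Continuous _).aemeasurable).trans ?_
  gcongr
  exact lintegral_enorm_prod_vpKernel_le hd hN x
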